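/- arXiv:0902.3528 — 5 statements merged into one kernel-verified Lean document; each statement's English description precedes it below -/
import Mathlib

section
/- Let S be a nonempty finite set of points in a pseudometric space with distance d (so d is symmetric and satisfies the triangle inequality), and let z = |S|. Let 2P be the cost of an optimal tour of S, i.e. 2P is the minimum, over all cyclic permutations σ of S, of ∑_{v ∈ S} d(v, σ(v)). Suppose l : S → ℝ≥0 satisfies (1) d(u,v) ≥ min(l(u), l(v)) for all distinct u, v ∈ S, and (2) l(v) ≤ P for all v ∈ S. Then (∑_{v ∈ S} l(v)) − max_{v ∈ S} l(v) ≤ ⌈log₂ z⌉ · P. -/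
/-!
Shortcutting a tour of `S` of cost `2P` to a subset `T` gives a tour of `T` of cost at most `2P`,
and its edges split into two alternating matchings, one of which costs at most `P`. Since
`min (l u) (l v) ≤ dist u v`, keeping the endpoint with smaller `l` from each matched edge gives
`⌊|T|/2⌋` points of total weight at most `P`. Removing them leaves `⌈|T|/2⌉` points and does not
increase the maximum, so by induction `∑ l - max l ≤ ⌈log₂ |T|⌉ * P`.

Tours are lists, closed up by returning to the head (`tourCost`).
-/

/-- A permutation is cyclic (a single cycle through all elements) iff its
iterates act transitively. -/
def IsCyclicPerm {β : Type*} (σ : Equiv.Perm β) : Prop :=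
  ∀ x y : β, ∃ n : ℕ, (σ ^ n) x = y

open Finset Function

namespace ImaseWaxman

section PairArgmin

variable {α β : Type*} [LinearOrder β]

def pairArgmin (f : α → β) : List α → List α
  | a :: b :: l => (if f a ≤ f b then a else b) :: pairArgmin f l
  | _ => []

theorem pairArgmin_sublist (f : α → β) :
    ∀ l : List α, (pairArgmin f l).Sublist l
  | a :: b :: l => by
    rw [pairArgmin]
    split_ifs
    · exact ((pairArgmin_sublist f l).cons b).cons_cons a
    · exact ((pairArgmin_sublist f l).cons_cons b).cons a
  | [] | [_] => List.nil_sublist _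

theorem length_pairArgmin (f : α → β) :
    ∀ l : List α, (pairArgmin f l).length = l.length / 2
  | a :: b :: l => by
    simp only [pairArgmin, List.length_cons, length_pairArgmin f l]
    omega
  | [] | [_] => by simp [pairArgmin]

end PairArgmin

section Orbit

variable {β : Type*} {f : β → β}

theorem mem_periodicPts_of_forall_exists_iterate_eq (hf : ∀ x y, ∃ n, f^[n] x = y) (x : β) :
    x ∈ periodicPts f := by
  obtain ⟨n, hn⟩ := hf (f x) x
  exact ⟨n + 1, n.succ_pos, by rw [IsPeriodicPt, IsFixedPt, iterate_succ_apply, hn]⟩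

theorem exists_lt_minimalPeriod_iterate_eq (hf : ∀ x y, ∃ n, f^[n] x = y) (x y : β) :
    ∃ k < minimalPeriod f x, f^[k] x = y := by
  obtain ⟨n, rfl⟩ := hf x y
  have hpos := minimalPeriod_pos_of_mem_periodicPts
    (mem_periodicPts_of_forall_exists_iterate_eq hf x)
  exact ⟨n % minimalPeriod f x, Nat.mod_lt _ hpos, iterate_mod_minimalPeriod_eq⟩

theorem sum_range_minimalPeriod_iterate {M : Type*} [Fintype β] [AddCommMonoid M]
    (hf : ∀ x y, ∃ n, f^[n] x = y) (x : β) (g : β → M) :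
    ∑ k ∈ range (minimalPeriod f x), g (f^[k] x) = ∑ y, g y := by
  refine sum_nbij (f^[·] x) (fun _ _ => mem_univ _) ?_ (fun y _ => ?_) (fun _ _ => rfl)
  · rw [coe_range]
    exact iterate_injOn_Iio_minimalPeriod
  · obtain ⟨k, hk, rfl⟩ := exists_lt_minimalPeriod_iterate_eq hf x y
    exact ⟨k, by simpa using hk, rfl⟩

end Orbit

section Metric

variable {α : Type*} [PseudoMetricSpace α]

noncomputable def pathLength : List α → ℝ
  | a :: b :: l => dist a b + pathLength (b :: l)
  | _ => 0

noncomputable def tourCost : List α → ℝ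
  | [] => 0
  | a :: l => pathLength (a :: l ++ [a])

noncomputable def pairCost : List α → ℝ
  | a :: b :: l => dist a b + pairCost l
  | _ => 0

theorem pairCost_nonneg : ∀ l : List α, 0 ≤ pairCost l
  | _ :: _ :: l => add_nonneg dist_nonneg (pairCost_nonneg l)
  | [] | [_] => le_rfl

theorem pairCost_le_pairCost_append : ∀ l l' : List α, pairCost l ≤ pairCost (l ++ l')
  | _ :: _ :: l, l' => by
    simpa [pairCost] using pairCost_le_pairCost_append l l'
  | [], l' => pairCost_nonneg l'
  | [a], l' => pairCost_nonneg (a :: l')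

theorem pathLength_eq_pairCost_add_pairCost_tail :
    ∀ l : List α, pathLength l = pairCost l + pairCost l.tail
  | a :: b :: l => by
    rw [pathLength, pathLength_eq_pairCost_add_pairCost_tail (b :: l)]
    simp only [pairCost, List.tail_cons]
    ring
  | [] | [_] => by simp [pathLength, pairCost]

theorem pathLength_cons_le_dist_add (a x : α) :
    ∀ l : List α, pathLength (a :: l) ≤ dist a x + pathLength (x :: l)
  | [] => by simp [pathLength]
  | c :: l => by
    simp only [pathLength]
    linarith [dist_triangle a x c]

theorem pathLength_append_singleton_le (b x : α) :
    ∀ l : List α, pathLength (l ++ [b]) ≤ pathLength (l ++ [x]) + dist x b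
  | [] => by simp [pathLength]
  | [c] => by simpa [pathLength] using dist_triangle c x b
  | c :: d :: l => by
    have ih := pathLength_append_singleton_le b x (d :: l)
    simp only [List.cons_append, pathLength] at ih ⊢
    linarith

theorem pathLength_le_of_sublist {l' l : List α} (h : l'.Sublist l) (a b : α) :
    pathLength (a :: l' ++ [b]) ≤ pathLength (a :: l ++ [b]) := by
  induction h generalizing a with
  | slnil => exact le_rfl
  | cons x _ ih =>
    exact (ih a).trans (pathLength_cons_le_dist_add a x _)
  | cons_cons x _ ih =>
    simpa only [List.cons_append, pathLength, add_le_add_iff_left] using ih x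

theorem tourCost_le_tourCost_cons (x : α) : ∀ l : List α, tourCost l ≤ tourCost (x :: l)
  | [] => by simp [tourCost, pathLength]
  | a :: l => by
    have h := pathLength_append_singleton_le a x (a :: l)
    simp only [tourCost, List.cons_append, pathLength] at h ⊢
    linarith [dist_comm x a]

theorem tourCost_le_of_sublist {l' l : List α} (h : l'.Sublist l) : tourCost l' ≤ tourCost l := by
  induction h with
  | slnil => exact le_rfl
  | cons x _ ih => exact ih.trans (tourCost_le_tourCost_cons x _)
  | cons_cons x h => exact pathLength_le_of_sublist h x x

/-- The two alternating matchings of a closed tour `l₀, …, l_{k-1}`: `pairCost l` pairs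
`{l₀, l₁}, {l₂, l₃}, …` and `pairCost (l.rotate 1)` pairs `{l₁, l₂}, {l₃, l₄}, …`, closing with
`{l_{k-1}, l₀}` when `k` is even. -/
theorem pairCost_add_pairCost_rotate_le_tourCost :
    ∀ l : List α, pairCost l + pairCost (l.rotate 1) ≤ tourCost l
  | [] => by simp [pairCost, tourCost]
  | a :: l => by
    rw [List.rotate_cons_succ, List.rotate_zero, tourCost,
      pathLength_eq_pairCost_add_pairCost_tail, List.cons_append, List.tail_cons]
    have h := pairCost_le_pairCost_append (a :: l) [a]
    rw [List.cons_append] at h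
    linarith

theorem sum_map_pairArgmin_le_pairCost (f : α → ℝ) :
    ∀ {l : List α}, l.Nodup → (∀ u ∈ l, ∀ v ∈ l, u ≠ v → min (f u) (f v) ≤ dist u v) →
      ((pairArgmin f l).map f).sum ≤ pairCost l
  | a :: b :: l, hl, hf => by
    obtain ⟨hab, -⟩ := List.nodup_cons.1 hl
    have hpick : f (if f a ≤ f b then a else b) = min (f a) (f b) := by
      rw [apply_ite f, min_def]
    have ih := sum_map_pairArgmin_le_pairCost f
      (hl.sublist ((List.sublist_cons_self b l).cons a))
      (fun u hu v hv => hf u (by simp [hu]) v (by simp [hv]))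
    simp only [pairArgmin, List.map_cons, List.sum_cons, pairCost, hpick]
    linarith [hf a (by simp) b (by simp) (fun h => hab (h ▸ List.mem_cons_self ..))]
  | [], _, _ | [_], _, _ => by simp [pairArgmin, pairCost]

theorem pathLength_map_range (w : ℕ → α) (n : ℕ) :
    pathLength ((List.range (n + 1)).map w) = ∑ k ∈ range n, dist (w k) (w (k + 1)) := by
  induction n generalizing w with
  | zero => simp [pathLength]
  | succ n ih =>
    have h := ih (w ∘ Nat.succ)
    rw [List.range_succ_eq_map, List.map_cons, List.map_map] at h ⊢
    rw [List.range_succ_eq_map, List.map_cons, List.map_map, pathLength, h, sum_range_succ']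
    simp [add_comm]

theorem tourCost_map_range {w : ℕ → α} {n : ℕ} (hn : 0 < n) (hw : w n = w 0) :
    tourCost ((List.range n).map w) = ∑ k ∈ range n, dist (w k) (w (k + 1)) := by
  obtain ⟨m, rfl⟩ := Nat.exists_eq_add_one_of_ne_zero hn.ne'
  have hclose : (List.range (m + 2)).map w = (List.range (m + 1)).map w ++ [w 0] := by
    rw [List.range_succ, List.map_append, List.map_singleton, hw]
  rw [← pathLength_map_range, hclose, List.range_succ_eq_map, List.map_cons]
  rfl

theorem exists_tourCost_eq_sum_dist {β : Type*} [Fintype β] [Nonempty β] {f : β → β}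
    (hf : ∀ x y, ∃ n, f^[n] x = y) (e : β → α) :
    ∃ p : List α, (∀ y, e y ∈ p) ∧ tourCost p = ∑ y, dist (e y) (e (f y)) := by
  obtain ⟨x⟩ := ‹Nonempty β›
  have hpos := minimalPeriod_pos_of_mem_periodicPts
    (mem_periodicPts_of_forall_exists_iterate_eq hf x)
  refine ⟨(List.range (minimalPeriod f x)).map (fun k => e (f^[k] x)), fun y => ?_, ?_⟩
  · obtain ⟨k, hk, rfl⟩ := exists_lt_minimalPeriod_iterate_eq hf x y
    exact List.mem_map.2 ⟨k, List.mem_range.2 hk, rfl⟩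
  · rw [tourCost_map_range hpos (by rw [iterate_minimalPeriod, iterate_zero_apply]),
      ← sum_range_minimalPeriod_iterate hf x]
    simp only [iterate_succ_apply']

variable {P : ℝ} {l : α → ℝ} {p : List α}

theorem exists_subset_card_eq_half_sum_le (hcost : tourCost p ≤ 2 * P) {T : Finset α}
    (hTp : ∀ x ∈ T, x ∈ p) (hdist : ∀ u ∈ T, ∀ v ∈ T, u ≠ v → min (l u) (l v) ≤ dist u v) :
    ∃ B ⊆ T, #B = #T / 2 ∧ ∑ x ∈ B, l x ≤ P := by
  classical
  set q := (p.filter (· ∈ T)).dedup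
  have hq : q.Nodup := List.nodup_dedup _
  have hmem : ∀ x, x ∈ q ↔ x ∈ T := fun x => by
    simpa [q] using fun hx : x ∈ T => hTp x hx
  have hqcost : tourCost q ≤ 2 * P :=
    (tourCost_le_of_sublist ((List.dedup_sublist _).trans List.filter_sublist)).trans hcost
  obtain ⟨r, hrq, hr⟩ : ∃ r : List α, r.Perm q ∧ pairCost r ≤ P := by
    have := pairCost_add_pairCost_rotate_le_tourCost q
    by_cases h : pairCost q ≤ P
    · exact ⟨q, List.Perm.refl q, h⟩
    · exact ⟨q.rotate 1, List.rotate_perm q 1, by linarith⟩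
  have hrmem : ∀ x, x ∈ r ↔ x ∈ T := fun x => hrq.mem_iff.trans (hmem x)
  have hr_nodup : r.Nodup := hrq.nodup_iff.2 hq
  have hrT : r.toFinset = T := Finset.ext fun x => by simp [hrmem]
  have hB_nodup : (pairArgmin l r).Nodup := hr_nodup.sublist (pairArgmin_sublist l r)
  refine ⟨(pairArgmin l r).toFinset, fun x hx => ?_, ?_, ?_⟩
  · exact (hrmem x).1 ((pairArgmin_sublist l r).subset (List.mem_toFinset.1 hx))
  · rw [List.toFinset_card_of_nodup hB_nodup, length_pairArgmin, ← hrT,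
      List.toFinset_card_of_nodup hr_nodup]
  · rw [List.sum_toFinset l hB_nodup]
    exact (sum_map_pairArgmin_le_pairCost l hr_nodup
      (fun u hu v hv => hdist u ((hrmem u).1 hu) v ((hrmem v).1 hv))).trans hr

theorem sum_sub_sup'_le_clog_card_mul (hcost : tourCost p ≤ 2 * P) (T : Finset α)
    (hTp : ∀ x ∈ T, x ∈ p) (hdist : ∀ u ∈ T, ∀ v ∈ T, u ≠ v → min (l u) (l v) ≤ dist u v)
    (hT : T.Nonempty) : ∑ x ∈ T, l x - T.sup' hT l ≤ Nat.clog 2 #T * P := by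
  classical
  induction T using Finset.strongInduction with | H T ih => ?_
  obtain ⟨a, rfl⟩ | hT2 := hT.exists_eq_singleton_or_nontrivial
  · simp
  have hT1 : 1 < #T := one_lt_card_iff_nontrivial.2 hT2
  obtain ⟨B, hBT, hBcard, hBsum⟩ := exists_subset_card_eq_half_sum_le hcost hTp hdist
  have hcard : #(T \ B) = (#T + 1) / 2 := by
    rw [card_sdiff_of_subset hBT, hBcard]
    omega
  have hTB : (T \ B).Nonempty := by
    rw [← card_pos, hcard]
    omega
  have hB : B.Nonempty := by
    rw [← card_pos, hBcard]
    omega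
  have hclog : Nat.clog 2 #T = Nat.clog 2 #(T \ B) + 1 := by
    rw [hcard, Nat.clog_of_two_le one_lt_two hT1]
    rfl
  have ih' := ih (T \ B) (sdiff_ssubset hBT hB) (fun x hx => hTp x (mem_sdiff.1 hx).1)
    (fun u hu v hv => hdist u (mem_sdiff.1 hu).1 v (mem_sdiff.1 hv).1) hTB
  have hsup : (T \ B).sup' hTB l ≤ T.sup' hT l := sup'_mono l sdiff_subset hTB
  rw [← sum_sdiff hBT, hclog]
  push_cast
  linarith

end Metric

end ImaseWaxman

theorem imase_waxman_lemma_general {α : Type*} [PseudoMetricSpace α]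
    (S : Finset α) (hS : S.Nonempty) (P : ℝ)
    (hP : IsLeast {c : ℝ | ∃ σ : Equiv.Perm {x // x ∈ S}, IsCyclicPerm σ ∧
            c = ∑ v : {x // x ∈ S}, dist (v : α) (σ v : α)} (2 * P))
    (l : α → ℝ)
    (h1 : ∀ u ∈ S, ∀ v ∈ S, u ≠ v → min (l u) (l v) ≤ dist u v) :
    (∑ v ∈ S, l v) - S.sup' hS l ≤ (⌈Real.logb 2 (S.card : ℝ)⌉ : ℝ) * P := by
  obtain ⟨⟨σ, hσ, hcost⟩, -⟩ := hP
  have hcyclic : ∀ x y, ∃ n, σ^[n] x = y := hσ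
  have := hS.to_subtype
  obtain ⟨p, hpS, hp⟩ := ImaseWaxman.exists_tourCost_eq_sum_dist hcyclic Subtype.val
  have hclog : ⌈Real.logb 2 (S.card : ℝ)⌉ = (Nat.clog 2 S.card : ℤ) := by
    rw [← Int.clog_natCast (R := ℝ), ← Real.ceil_logb_natCast (Nat.cast_nonneg _), Nat.cast_ofNat]
  rw [hclog, Int.cast_natCast]
  exact ImaseWaxman.sum_sub_sup'_le_clog_card_mul (hp.trans hcost.symm).le S
    (fun x hx => hpS ⟨x, hx⟩) h1 hS

/-- **Imase–Waxman lemma.**  Let `S` be a nonempty finite set of points in a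
pseudometric space, `z = |S|`, and let `2P` be the minimum cost of a tour
(cyclic permutation) of `S`.  If `l : S → ℝ≥0` satisfies
`d(u,v) ≥ min (l u) (l v)` for all distinct `u v ∈ S` and `l v ≤ P` for all
`v ∈ S`, then `(∑_{v ∈ S} l v) - max_{v ∈ S} l v ≤ ⌈log₂ z⌉ * P`. -/
theorem imase_waxman_lemma {α : Type*} [PseudoMetricSpace α]
    (S : Finset α) (hS : S.Nonempty) (P : ℝ)
    (hP : IsLeast {c : ℝ | ∃ σ : Equiv.Perm {x // x ∈ S}, IsCyclicPerm σ ∧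
            c = ∑ v : {x // x ∈ S}, dist (v : α) (σ v : α)} (2 * P))
    (l : α → ℝ) (hl0 : ∀ v ∈ S, 0 ≤ l v)
    (h1 : ∀ u ∈ S, ∀ v ∈ S, u ≠ v → min (l u) (l v) ≤ dist u v)
    (h2 : ∀ v ∈ S, l v ≤ P) :
    (∑ v ∈ S, l v) - S.sup' hS l ≤ (⌈Real.logb 2 (S.card : ℝ)⌉ : ℝ) * P :=
  imase_waxman_lemma_general S hS P hP l h1
end

section
/- Let S be a finite set of points in a pseudometric space with distance d, and let σ be a cyclic permutation of S with tour cost C = ∑_{v ∈ S} d(v, σ(v)). Then for any two points u, v ∈ S one has d(u,v) ≤ C/2. -/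
open Function Finset

/-- A closed walk `g 0, …, g p = g 0` passes through `g m` and splits there into two arcs, each
of length at least `dist (g 0) (g m)`. -/
theorem two_mul_dist_le_sum_dist_of_closed {α : Type*} [PseudoMetricSpace α] (g : ℕ → α)
    {m p : ℕ} (hm : m ≤ p) (hp : g p = g 0) :
    2 * dist (g 0) (g m) ≤ ∑ i ∈ range p, dist (g i) (g (i + 1)) := by
  have hfirst := dist_le_Ico_sum_dist g (Nat.zero_le m)
  have hsecond := dist_le_Ico_sum_dist g hm
  rw [hp, dist_comm] at hsecond
  rw [range_eq_Ico, ← sum_Ico_consecutive _ (Nat.zero_le m) hm]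
  linarith

namespace Function

variable {β : Type*} {f : β → β} {x : β}

theorem exists_lt_minimalPeriod_iterate_eq (hx : x ∈ periodicPts f) {y : β}
    (hy : ∃ n, f^[n] x = y) : ∃ i < minimalPeriod f x, f^[i] x = y := by
  obtain ⟨n, rfl⟩ := hy
  exact ⟨n % minimalPeriod f x, Nat.mod_lt _ (minimalPeriod_pos_of_mem_periodicPts hx),
    iterate_mod_minimalPeriod_eq⟩

theorem sum_range_minimalPeriod_eq_sum {M : Type*} [AddCommMonoid M] [Fintype β]
    (hx : x ∈ periodicPts f) (horbit : ∀ y, ∃ n, f^[n] x = y) (h : β → M) :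
    ∑ i ∈ range (minimalPeriod f x), h (f^[i] x) = ∑ y, h y := by
  refine sum_nbij (f^[·] x) (fun _ _ => mem_univ _) ?_ ?_ (fun _ _ => rfl)
  · intro i hi j hj hij
    exact iterate_injOn_Iio_minimalPeriod (mem_range.mp hi) (mem_range.mp hj) hij
  · intro y _
    obtain ⟨i, hi, hiy⟩ := exists_lt_minimalPeriod_iterate_eq hx (horbit y)
    exact ⟨i, mem_coe.mpr (mem_range.mpr hi), hiy⟩

end Function

/-- If `σ` is a cyclic permutation (tour) of a finite set `S` of points of a
pseudometric space, with tour cost `C = ∑_{v ∈ S} d(v, σ v)`, then any two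
points `u v ∈ S` satisfy `d(u,v) ≤ C / 2`. -/
theorem dist_le_half_tour_cost {α : Type*} [PseudoMetricSpace α]
    (S : Finset α) (σ : Equiv.Perm {x // x ∈ S}) (hσ : IsCyclicPerm σ)
    (C : ℝ) (hC : C = ∑ v : {x // x ∈ S}, dist (v : α) (σ v : α)) :
    ∀ u ∈ S, ∀ v ∈ S, dist u v ≤ C / 2 := by
  intro u hu v hv
  set x : {x // x ∈ S} := ⟨u, hu⟩
  have hx : x ∈ periodicPts σ := σ.injective.mem_periodicPts x
  have horbit : ∀ y, ∃ n, σ^[n] x = y := by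
    simpa only [Equiv.Perm.iterate_eq_pow] using hσ x
  let g : ℕ → α := fun i => σ^[i] x
  have hcost : ∑ i ∈ range (minimalPeriod σ x), dist (g i) (g (i + 1)) = C := by
    simp only [g, iterate_succ_apply']
    rw [sum_range_minimalPeriod_eq_sum hx horbit (fun y => dist (y : α) (σ y)), hC]
  obtain ⟨m, hm, hmv⟩ := exists_lt_minimalPeriod_iterate_eq hx (horbit ⟨v, hv⟩)
  have hclosed : g (minimalPeriod σ x) = g 0 :=
    congrArg Subtype.val (isPeriodicPt_minimalPeriod σ x)
  have harcs := two_mul_dist_le_sum_dist_of_closed g hm.le hclosed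
  simp only [g, hmv, iterate_zero_apply] at harcs
  linarith
end

section
/- Let X be a finite set of points in a pseudometric space with distance d, and let T be a tree on vertex set X (a connected acyclic simple graph whose vertices are the points of X). Let W = ∑_{{u,v} ∈ E(T)} d(u,v) be the total weight of T. Then there exists a cyclic permutation σ of X with ∑_{x ∈ X} d(x, σ(x)) ≤ 2W. -/
open SimpleGraph in
lemma isCyclicPerm_of_reach {β : Type*} [Finite β] (σ : Equiv.Perm β) (x0 : β)
    (h : ∀ y, ∃ n : ℕ, (σ ^ n) x0 = y) : IsCyclicPerm σ := by
  intro x y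
  obtain ⟨a, ha⟩ := h x
  obtain ⟨b, hb⟩ := h y
  have hN : σ ^ orderOf σ = 1 := pow_orderOf_eq_one σ
  have hord : 1 ≤ orderOf σ := orderOf_pos σ
  have hle : a ≤ a * orderOf σ := Nat.le_mul_of_pos_right _ hord
  refine ⟨(a * orderOf σ - a) + b, ?_⟩
  rw [← ha, ← Equiv.Perm.mul_apply, ← pow_add,
    show a * orderOf σ - a + b + a = b + a * orderOf σ by omega,
    pow_add, pow_mul', hN, one_pow, mul_one, hb]

lemma tree_exists_leaf {β : Type*} [Fintype β] (T : SimpleGraph β) (hT : T.IsTree)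
    (h2 : 2 ≤ Fintype.card β) :
    ∃ v u : β, T.Adj v u ∧ ∀ w, T.Adj v w → w = u := by
  classical
  letI : DecidableRel T.Adj := Classical.decRel _
  have hdeg : ∀ v, 1 ≤ T.degree v := by
    intro v
    rw [Nat.one_le_iff_ne_zero, ← Nat.pos_iff_ne_zero, T.degree_pos_iff_exists_adj]
    obtain ⟨w, hw⟩ := Fintype.exists_ne_of_one_lt_card h2 v
    obtain ⟨p⟩ := hT.isConnected.preconnected v w
    cases p with
    | nil => exact absurd rfl (Ne.symm hw)
    | cons h q => exact ⟨_, h⟩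
  have hcE := hT.card_edgeFinset
  have hsum : ∑ v, T.degree v = 2 * T.edgeFinset.card :=
    T.sum_degrees_eq_twice_card_edges
  by_contra hcon
  push_neg at hcon
  have hdeg2 : ∀ v, 2 ≤ T.degree v := by
    intro v
    rcases Nat.lt_or_ge (T.degree v) 2 with h | h
    · exfalso
      have h1 : T.degree v = 1 := le_antisymm (by omega) (hdeg v)
      rw [← T.card_neighborFinset_eq_degree, Finset.card_eq_one] at h1
      obtain ⟨u, hu⟩ := h1
      have hadj : T.Adj v u := by
        rw [← T.mem_neighborFinset, hu]; simp
      obtain ⟨w, hw1, hw2⟩ := hcon v u hadj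
      exact hw2 (by have := (T.mem_neighborFinset v w).2 hw1; rw [hu] at this; simpa using this)
    · exact h
  have : 2 * Fintype.card β ≤ ∑ v, T.degree v := by
    calc 2 * Fintype.card β = ∑ _v : β, 2 := by simp [mul_comm]
      _ ≤ ∑ v, T.degree v := Finset.sum_le_sum fun v _ => hdeg2 v
  omega

lemma leaf_not_mem_path_support {β : Type*} {T : SimpleGraph β} {v u : β}
    (hleaf : ∀ w, T.Adj v w → w = u) :
    ∀ {x y : β} (p : T.Walk x y), p.IsPath → x ≠ v → y ≠ v → v ∉ p.support := by
  intro x y p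
  induction p with
  | nil =>
    intro _ hx _
    simp [Ne.symm hx]
  | @cons x c y h q ih =>
    intro hp hx hy
    rw [SimpleGraph.Walk.support_cons, List.mem_cons]
    rintro (rfl | hvq)
    · exact hx rfl
    by_cases hc : c = v
    · subst hc
      cases q with
      | nil => exact hy rfl
      | @cons _ c' _ h' q' =>
        have hx' : x = u := hleaf x h.symm
        have hc' : c' = u := hleaf c' h'
        have : x ∈ q'.support := by
          rw [show x = c' from hx'.trans hc'.symm]
          exact q'.start_mem_support
        have hnd := hp.support_nodup
        simp [SimpleGraph.Walk.support_cons] at hnd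
        exact hnd.1.2 this
    · exact ih hp.of_cons hc hy hvq

lemma reachable_induce_of_walk {β : Type*} {T : SimpleGraph β} {s : Set β} :
    ∀ {x y : β} (p : T.Walk x y), (∀ z ∈ p.support, z ∈ s) →
      ∀ (hx : x ∈ s) (hy : y ∈ s), (T.induce s).Reachable ⟨x, hx⟩ ⟨y, hy⟩ := by
  intro x y p
  induction p with
  | nil => intro _ hx hy; exact SimpleGraph.Reachable.refl _
  | @cons x c y h q ih =>
    intro hsup hx hy
    have hc : c ∈ s := hsup c (by simp)
    have hadj : (T.induce s).Adj ⟨x, hx⟩ ⟨c, hc⟩ := h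
    exact hadj.reachable.trans
      (ih (fun z hz => hsup z (by simp [hz])) hc hy)

lemma induce_leaf_isTree {β : Type*} {T : SimpleGraph β} (hT : T.IsTree) {v u : β}
    (hadj : T.Adj v u) (hleaf : ∀ w, T.Adj v w → w = u) :
    (T.induce {x | x ≠ v}).IsTree := by
  classical
  constructor
  · haveI : Nonempty ({x | x ≠ v} : Set β) := ⟨⟨u, hadj.ne'⟩⟩
    refine ⟨?_⟩
    rintro ⟨x, hx⟩ ⟨y, hy⟩
    obtain ⟨w⟩ := hT.isConnected.preconnected x y
    have hp := w.toPath.2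
    have hv : v ∉ (w.toPath : T.Walk x y).support :=
      leaf_not_mem_path_support hleaf _ hp hx hy
    exact reachable_induce_of_walk _ (fun z hz => Set.mem_setOf.mpr fun (hzv : z = v) => hv (hzv ▸ hz)) hx hy
  · intro x c hc
    have hinj : Function.Injective (SimpleGraph.Embedding.induce (G := T) {x | x ≠ v}).toHom :=
      Subtype.val_injective
    exact hT.IsAcyclic (c.map _) (hc.map hinj)


lemma edge_sum_split {β : Type*} [Fintype β] (T : SimpleGraph β)
    {v u : β} [Fintype T.edgeSet] [Fintype (T.induce {x | x ≠ v}).edgeSet]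
    (hadj : T.Adj v u) (hleaf : ∀ w, T.Adj v w → w = u)
    (f : β → β → ℝ) (hf : ∀ a b, f a b = f b a) :
    ∑ e ∈ T.edgeFinset, Sym2.lift ⟨f, hf⟩ e
      = f v u + ∑ e ∈ (T.induce {x | x ≠ v}).edgeFinset,
          Sym2.lift ⟨fun (a b : {x | x ≠ v}) => f (a : β) (b : β), fun a b => hf _ _⟩ e := by
  classical
  set T' := T.induce {x | x ≠ v} with hT'
  have hkey : T.edgeFinset
      = insert s(v, u) (T'.edgeFinset.image (Sym2.map Subtype.val)) := by
    refine Finset.Subset.antisymm ?_ ?_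
    · intro e he
      induction e with
      | _ a b =>
        rw [SimpleGraph.mem_edgeFinset, SimpleGraph.mem_edgeSet] at he
        rw [Finset.mem_insert, Finset.mem_image]
        by_cases hav : a = v
        · subst hav
          left; rw [hleaf b he]
        · by_cases hbv : b = v
          · subst hbv
            left; rw [hleaf a he.symm, Sym2.eq_swap]
          · right
            refine ⟨s(⟨a, hav⟩, ⟨b, hbv⟩), ?_, by simp [Sym2.map_pair_eq]⟩
            simpa [hT', SimpleGraph.mem_edgeFinset, SimpleGraph.mem_edgeSet] using he
    · rw [Finset.insert_subset_iff]
      constructor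
      · rw [SimpleGraph.mem_edgeFinset, SimpleGraph.mem_edgeSet]
        exact hadj
      · rw [Finset.image_subset_iff]
        intro e' he'
        induction e' with
        | _ p q =>
          rw [SimpleGraph.mem_edgeFinset, SimpleGraph.mem_edgeSet] at he'
          rw [Sym2.map_pair_eq, SimpleGraph.mem_edgeFinset, SimpleGraph.mem_edgeSet]
          exact he'
  have hnotmem : s(v, u) ∉ T'.edgeFinset.image (Sym2.map Subtype.val) := by
    rw [Finset.mem_image]
    rintro ⟨e', _, heq⟩
    induction e' with
    | _ p q =>
      rw [Sym2.map_pair_eq, Sym2.eq_iff] at heq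
      rcases heq with ⟨hp, _⟩ | ⟨_, hq⟩
      · exact p.2 hp
      · exact q.2 hq
  rw [hkey, Finset.sum_insert hnotmem,
    Finset.sum_image (fun a _ b _ h => Sym2.map.injective Subtype.val_injective h)]
  have h2 : ∀ e ∈ T'.edgeFinset, Sym2.lift ⟨f, hf⟩ (Sym2.map Subtype.val e)
      = Sym2.lift ⟨fun (a b : {x | x ≠ v}) => f (a : β) (b : β), fun a b => hf _ _⟩ e := by
    intro e _
    induction e with
    | _ p q => simp [Sym2.map_pair_eq]
  rw [Finset.sum_congr rfl h2, Sym2.lift_mk]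
  congr!

universe u

theorem key_tour (n : ℕ) : ∀ (β : Type u) [Fintype β] [PseudoMetricSpace β]
    (T : SimpleGraph β) [Fintype T.edgeSet], T.IsTree → Fintype.card β = n →
    ∃ σ : Equiv.Perm β, IsCyclicPerm σ ∧
      ∑ x, dist x (σ x) ≤ 2 * ∑ e ∈ T.edgeFinset,
        Sym2.lift ⟨fun a b => Dist.dist a b, fun a b => dist_comm a b⟩ e := by
  induction n using Nat.strong_induction_on with
  | _ n ih =>
    intro β _ _ T _ hT hcard
    classical
    have hne : Nonempty β := hT.isConnected.nonempty
    have hpos : 1 ≤ Fintype.card β := Fintype.card_pos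
    have hWnn : 0 ≤ ∑ e ∈ T.edgeFinset,
        Sym2.lift ⟨fun a b => Dist.dist a b, fun a b => dist_comm a b⟩ e := by
      refine Finset.sum_nonneg fun e _ => ?_
      induction e with
      | _ a b => simpa using dist_nonneg
    by_cases h2 : 2 ≤ Fintype.card β
    case neg =>
      -- card = 1
      have h1 : Fintype.card β = 1 := by omega
      haveI : Subsingleton β := Fintype.card_le_one_iff_subsingleton.mp (by omega)
      refine ⟨1, fun x y => ⟨0, Subsingleton.elim _ _⟩, ?_⟩
      have : ∑ x : β, dist x ((1 : Equiv.Perm β) x) = 0 := by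
        simp
      rw [this]
      linarith
    case pos =>
      obtain ⟨v, u, hadj, hleaf⟩ := tree_exists_leaf T hT h2
      set s : Set β := {x | x ≠ v} with hs
      letI : Fintype ↥s := Fintype.ofFinite _
      set T' : SimpleGraph ↥s := T.induce s with hT'def
      letI : Fintype T'.edgeSet := Fintype.ofFinite _
      have hT' : T'.IsTree := induce_leaf_isTree hT hadj hleaf
      have hcard' : Fintype.card ↥s = n - 1 := by
        have h1 : Fintype.card ↥s = Fintype.card {x // ¬ x = v} :=
          Fintype.card_congr (Equiv.subtypeEquivRight (fun x => by simp [hs]))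
        have h2 := Fintype.card_subtype_compl (fun x : β => x = v)
        rw [Fintype.card_subtype_eq] at h2
        omega
      obtain ⟨σ', hcyc', hcost'⟩ := ih (n - 1) (by omega) ↥s T' hT' hcard'
      have huv : u ≠ v := hadj.ne'
      set u' : ↥s := ⟨u, huv⟩ with hu'def
      set σ'' : Equiv.Perm β :=
        Equiv.Perm.subtypeCongr σ' (1 : Equiv.Perm {x // ¬ x ∈ s}) with hσ''
      have hvns : ¬ v ∈ s := by simp [hs]
      have Fv : σ'' v = v := by
        rw [hσ'', Equiv.Perm.subtypeCongr.right_apply _ _ hvns]; rfl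
      have Fx : ∀ x : ↥s, σ'' ↑x = ↑(σ' x) := fun x =>
        Equiv.Perm.subtypeCongr.left_apply_subtype _ _ x
      set σ : Equiv.Perm β := σ'' * Equiv.swap v u with hσ
      have F1 : σ v = ↑(σ' u') := by
        rw [hσ, Equiv.Perm.mul_apply, Equiv.swap_apply_left]
        exact Fx u'
      have F2 : σ u = v := by
        rw [hσ, Equiv.Perm.mul_apply, Equiv.swap_apply_right, Fv]
      have F3 : ∀ x : ↥s, x ≠ u' → σ ↑x = ↑(σ' x) := by
        intro x hx
        rw [hσ, Equiv.Perm.mul_apply,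
          Equiv.swap_apply_of_ne_of_ne x.2 (fun h => hx (Subtype.ext h))]
        exact Fx x
      -- cyclicity
      have hKex : ∃ k, (σ' ^ k) (σ' u') = u' := hcyc' (σ' u') u'
      set K := Nat.find hKex with hKdef
      have hKspec : (σ' ^ K) (σ' u') = u' := Nat.find_spec hKex
      have claimA : ∀ k, k ≤ K → (σ ^ (k + 1)) v = ↑((σ' ^ k) (σ' u')) := by
        intro k
        induction k with
        | zero => intro _; simpa using F1
        | succ k ihk =>
          intro hk
          have hne : (σ' ^ k) (σ' u') ≠ u' :=
            Nat.find_min hKex (by omega)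
          rw [pow_succ', Equiv.Perm.mul_apply, ihk (by omega), F3 _ hne,
            pow_succ', Equiv.Perm.mul_apply]
      have reach : ∀ y : β, ∃ m : ℕ, (σ ^ m) v = y := by
        intro y
        by_cases hy : y = v
        · exact ⟨0, by simp [hy]⟩
        · have hex : ∃ m, (σ' ^ m) (σ' u') = ⟨y, hy⟩ := hcyc' (σ' u') ⟨y, hy⟩
          set m := Nat.find hex with hmdef
          have hmspec : (σ' ^ m) (σ' u') = ⟨y, hy⟩ := Nat.find_spec hex
          have hmK : m ≤ K := by
            by_contra hc
            push_neg at hc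
            have hcyc1 : (σ' ^ (K + 1)) (σ' u') = σ' u' := by
              rw [pow_succ', Equiv.Perm.mul_apply, hKspec]
            have : (σ' ^ (m - (K + 1))) (σ' u') = ⟨y, hy⟩ := by
              rw [← hcyc1, ← Equiv.Perm.mul_apply, ← pow_add,
                show m - (K + 1) + (K + 1) = m by omega, hmspec]
            exact absurd this (Nat.find_min hex (by omega))
          refine ⟨m + 1, ?_⟩
          rw [claimA m hmK, hmspec]
      have hcyc : IsCyclicPerm σ := isCyclicPerm_of_reach σ v reach
      -- cost
      refine ⟨σ, hcyc, ?_⟩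
      have step1 : ∑ x : β, dist x (σ x)
          = dist v (σ v) + ∑ x ∈ Finset.univ.erase v, dist x (σ x) :=
        (Finset.add_sum_erase _ _ (Finset.mem_univ v)).symm
      have step2 : ∑ x ∈ Finset.univ.erase v, dist x (σ x)
          = ∑ x : ↥s, dist (x : β) (σ x) := by
        refine Finset.sum_subtype _ (fun x => ?_) _
        simp [hs]
      have step3 : ∑ x : ↥s, dist (x : β) (σ x)
          = dist u (σ u) + ∑ x ∈ Finset.univ.erase u', dist (x : β) (σ x) :=
        (Finset.add_sum_erase _ _ (Finset.mem_univ u')).symm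
      have step4 : ∑ x ∈ Finset.univ.erase u', dist (x : β) (σ (x : β))
          = ∑ x ∈ Finset.univ.erase u', dist (x : β) ((σ' x : β)) := by
        refine Finset.sum_congr rfl fun x hx => ?_
        rw [F3 x (Finset.ne_of_mem_erase hx)]
      have step5 : ∑ x : ↥s, dist x (σ' x)
          = dist (u' : β) ((σ' u' : β)) + ∑ x ∈ Finset.univ.erase u', dist (x : β) ((σ' x : β)) :=
        (Finset.add_sum_erase _ _ (Finset.mem_univ u')).symm
      have tri : dist v ((σ' u' : β)) ≤ dist v u + dist u ((σ' u' : β)) :=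
        dist_triangle _ _ _
      have hW := edge_sum_split T hadj hleaf (fun a b => Dist.dist a b)
        (fun a b => dist_comm a b)
      have hWW : ∑ e ∈ T'.edgeFinset,
          Sym2.lift ⟨fun (a b : ↥s) => dist (a : β) (b : β), fun a b => dist_comm _ _⟩ e
          = ∑ e ∈ T'.edgeFinset,
          Sym2.lift ⟨fun (a b : ↥s) => Dist.dist a b, fun a b => dist_comm a b⟩ e := by
        refine Finset.sum_congr rfl fun e _ => ?_
        induction e with
        | _ a b => rfl
      rw [step1, step2, step3, step4, F1, F2]
      rw [hW]
      have hfinal := hcost'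
      rw [step5] at hfinal
      rw [← hWW] at hfinal
      have hud : (u' : β) = u := rfl
      rw [hud] at hfinal
      have hdc : dist u v = dist v u := dist_comm u v
      linarith
open SimpleGraph in
/-- **Tree doubling.**  Let `X` be a finite set of points of a pseudometric
space and `T` a tree on vertex set `X`, of total weight
`W = ∑_{{u,v} ∈ E(T)} d(u,v)`.  Then there is a cyclic permutation (tour)
`σ` of `X` with `∑_{x ∈ X} d(x, σ x) ≤ 2 * W`. -/
theorem exists_tour_le_two_mul_tree_weight {α : Type*} [PseudoMetricSpace α]
    (X : Finset α) (T : SimpleGraph {x // x ∈ X}) (hT : T.IsTree)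
    [Fintype T.edgeSet] (W : ℝ)
    (hW : W = ∑ e ∈ T.edgeFinset,
        Sym2.lift ⟨fun (u v : {x // x ∈ X}) => dist (u : α) (v : α),
          fun u v => dist_comm (u : α) (v : α)⟩ e) :
    ∃ σ : Equiv.Perm {x // x ∈ X}, IsCyclicPerm σ ∧
      ∑ x : {x // x ∈ X}, dist (x : α) (σ x : α) ≤ 2 * W := by
  obtain ⟨σ, hcyc, hle⟩ :=
    key_tour (Fintype.card {x // x ∈ X}) {x // x ∈ X} T hT rfl
  refine ⟨σ, hcyc, ?_⟩
  have h1 : ∑ x : {x // x ∈ X}, dist (x : α) ((σ x : {x // x ∈ X}) : α)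
      = ∑ x : {x // x ∈ X}, Dist.dist x (σ x) := rfl
  have h2 : W = ∑ e ∈ T.edgeFinset,
      Sym2.lift ⟨fun a b => Dist.dist a b, fun a b => dist_comm a b⟩ e := by
    rw [hW]
    refine Finset.sum_congr rfl fun e _ => ?_
    induction e with
    | _ a b => rfl
  rw [h1, h2]
  exact hle
end

section
/- Let v_0, v_1, …, v_z be pairwise distinct points in a pseudometric space with distance d, let Y be a finite set of points containing {v_0, …, v_z}, and let T be a tree on vertex set Y (a connected acyclic simple graph on Y) of total weight W = ∑_{{u,v} ∈ E(T)} d(u,v). Then ∑_{i=1}^{z} min_{0 ≤ j < i} d(v_i, v_j) ≤ ⌈log₂(z+1)⌉ · W. -/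
/-!
A tree of length `W` through the points can be dismantled leaf by leaf. Rebuilding it leaf by
leaf shows that every even subset of its vertices has a perfect matching of length at most `W`:
a new leaf `x` hanging from `y` either pairs with `y`, or takes over the partner of `y`, which by
the triangle inequality costs at most `d(x, y)` more.

Given a set `I` of indices `≥ 1`, pad it with the root index `0` to an even set and match the
corresponding points. In each pair the later index `i` lies in `I` and its greedy cost is at most
the length of the pair, so at least half of `I` has total greedy cost at most `W`. Discarding such
a half `⌈log₂ (z + 1)⌉` times exhausts the indices `1, …, z`.
-/

open Finset

def IsPairingOn {ι : Type*} (P : Finset ι) (m : ι → ι) : Prop :=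
  ∀ a ∈ P, m a ∈ P ∧ m a ≠ a ∧ m (m a) = a

namespace IsPairingOn

variable {ι α : Type*} {P : Finset ι} {m : ι → ι}

lemma insert_insert [DecidableEq ι] (hm : IsPairingOn P m) {a b : ι} (ha : a ∉ P) (hb : b ∉ P)
    (hab : a ≠ b) :
    IsPairingOn (insert a (insert b P)) (Function.update (Function.update m a b) b a) := by
  set m' := Function.update (Function.update m a b) b a
  have hm'a : m' a = b := by simp [m', hab]
  have hm'b : m' b = a := by simp [m']
  have hm'P : ∀ c ∈ P, m' c = m c := fun c hc => by
    simp [m', show c ≠ a by rintro rfl; exact ha hc, show c ≠ b by rintro rfl; exact hb hc]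
  intro c hc
  rcases mem_insert.mp hc with rfl | hc
  · simp [hm'a, hm'b, hab.symm]
  rcases mem_insert.mp hc with rfl | hc
  · simp [hm'a, hm'b, hab]
  obtain ⟨hmc, hmne, hmm⟩ := hm c hc
  simp [hm'P c hc, hm'P _ hmc, hmc, hmne, hmm]

lemma erase_erase [DecidableEq ι] (hm : IsPairingOn P m) {a : ι} (ha : a ∈ P) :
    IsPairingOn ((P.erase a).erase (m a)) m := by
  intro c hc
  simp only [mem_erase] at hc ⊢
  obtain ⟨hcma, hca, hcP⟩ := hc
  obtain ⟨hmc, hmne, hmm⟩ := hm c hcP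
  refine ⟨⟨fun h => hca ?_, fun h => hcma ?_, hmc⟩, hmne, hmm⟩
  · rw [← hmm, h, (hm a ha).2.2]
  · rw [← hmm, h]

lemma sum_eq_two_nsmul_sum_filter_lt [LinearOrder ι] {M : Type*} [AddCommMonoid M]
    (hm : IsPairingOn P m) (g : ι → ι → M) (hg : ∀ i j, g i j = g j i) :
    ∑ i ∈ P, g i (m i) = 2 • ∑ i ∈ P with m i < i, g i (m i) := by
  rw [two_nsmul, ← sum_filter_add_sum_filter_not P (fun i => m i < i)]
  congr 1
  refine sum_nbij' m m ?_ ?_ ?_ ?_ ?_ <;> simp only [mem_filter, not_lt]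
  · rintro i ⟨hi, hlt⟩
    obtain ⟨hmi, hne, hmm⟩ := hm i hi
    exact ⟨hmi, hmm.symm ▸ lt_of_le_of_ne hlt hne.symm⟩
  · rintro i ⟨hi, hlt⟩
    obtain ⟨hmi, -, hmm⟩ := hm i hi
    exact ⟨hmi, hmm.symm ▸ hlt.le⟩
  · rintro i ⟨hi, -⟩; exact (hm i hi).2.2
  · rintro i ⟨hi, -⟩; exact (hm i hi).2.2
  · rintro i ⟨hi, -⟩; rw [(hm i hi).2.2, hg]

lemma card_eq_two_mul_card_filter_lt [LinearOrder ι] (hm : IsPairingOn P m) :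
    #P = 2 * #{i ∈ P | m i < i} := by
  have := hm.sum_eq_two_nsmul_sum_filter_lt (fun _ _ => (1 : ℕ)) fun _ _ => rfl
  rwa [← card_eq_sum_ones, ← card_eq_sum_ones, smul_eq_mul] at this

lemma exists_pullback [DecidableEq α] {f : ι → α} (hf : Set.InjOn f P) {m : α → α}
    (hm : IsPairingOn (P.image f) m) :
    ∃ μ, IsPairingOn P μ ∧ ∀ i ∈ P, f (μ i) = m (f i) := by
  have hex : ∀ i ∈ P, ∃ j ∈ P, f j = m (f i) := fun i hi =>
    mem_image.mp (hm (f i) (mem_image_of_mem f hi)).1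
  choose! μ hμP hμ using hex
  refine ⟨μ, fun i hi => ⟨hμP i hi, fun h => ?_, hf (hμP _ (hμP i hi)) hi ?_⟩, hμ⟩
  · exact (hm (f i) (mem_image_of_mem f hi)).2.1 (by rw [← hμ i hi, h])
  · rw [hμ _ (hμP i hi), hμ i hi, (hm (f i) (mem_image_of_mem f hi)).2.2]

end IsPairingOn

section Metric

variable {α : Type*} [PseudoMetricSpace α] [DecidableEq α]

lemma IsPairingOn.exists_insert_insert {P : Finset α} {m : α → α} (hm : IsPairingOn P m)
    {a b : α} (ha : a ∉ P) (hb : b ∉ P) (hab : a ≠ b) :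
    ∃ m', IsPairingOn (insert a (insert b P)) m' ∧
      ∑ c ∈ insert a (insert b P), dist c (m' c) =
        2 * dist a b + ∑ c ∈ P, dist c (m c) := by
  refine ⟨_, hm.insert_insert ha hb hab, ?_⟩
  have hP : ∀ c ∈ P, Function.update (Function.update m a b) b a c = m c := fun c hc => by
    simp [show c ≠ a by rintro rfl; exact ha hc, show c ≠ b by rintro rfl; exact hb hc]
  rw [sum_insert (by simp [hab, ha]), sum_insert hb, sum_congr rfl fun c hc => by rw [hP c hc]]
  simp [hab, dist_comm b a]
  ring

lemma IsPairingOn.sum_dist_eq_add_sum_erase_erase {P : Finset α} {m : α → α}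
    (hm : IsPairingOn P m) {a : α} (ha : a ∈ P) :
    ∑ c ∈ P, dist c (m c) =
      2 * dist a (m a) + ∑ c ∈ (P.erase a).erase (m a), dist c (m c) := by
  obtain ⟨hma, hne, hmm⟩ := hm a ha
  rw [← add_sum_erase P _ ha, ← add_sum_erase _ _ (mem_erase.mpr ⟨hne, hma⟩), hmm,
    dist_comm (m a) a]
  ring

inductive Attachable : Finset α → ℝ → Prop
  | singleton (a : α) : Attachable {a} 0
  | attach {s : Finset α} {w : ℝ} {x y : α} (hx : x ∉ s) (hy : y ∈ s) (h : Attachable s w) :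
      Attachable (insert x s) (w + dist x y)

lemma Attachable.map {β : Type*} [PseudoMetricSpace β] [DecidableEq β] {s : Finset α} {w : ℝ}
    (h : Attachable s w) (f : α ↪ β) (hf : Isometry f) : Attachable (s.map f) w := by
  induction h with
  | singleton a => simpa using Attachable.singleton (f a)
  | attach hx hy _ ih =>
    rw [map_insert, ← hf.dist_eq]
    exact ih.attach (by simpa using hx) (mem_map_of_mem f hy)

lemma Attachable.exists_isPairingOn {s : Finset α} {w : ℝ} (h : Attachable s w) {P : Finset α}
    (hPs : P ⊆ s) (hP : Even #P) :
    ∃ m, IsPairingOn P m ∧ ∑ a ∈ P, dist a (m a) ≤ 2 * w := by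
  induction h generalizing P with
  | singleton a =>
    obtain rfl | rfl := subset_singleton_iff.mp hPs
    · exact ⟨id, by simp [IsPairingOn]⟩
    · simp at hP
  | @attach s w x y hx hy h ih =>
    have hxy : x ≠ y := by rintro rfl; exact hx hy
    by_cases hxP : x ∈ P
    case neg =>
      obtain ⟨m, hm, hcost⟩ := ih (fun a ha => (mem_insert.mp (hPs ha)).resolve_left
        (by rintro rfl; exact hxP ha)) hP
      exact ⟨m, hm, by linarith [dist_nonneg (x := x) (y := y)]⟩
    have hPx : P.erase x ⊆ s := fun a ha =>
      (mem_insert.mp (hPs (mem_of_mem_erase ha))).resolve_left (ne_of_mem_erase ha)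
    by_cases hyP : y ∈ P
    · have hyPx : y ∈ P.erase x := mem_erase.mpr ⟨hxy.symm, hyP⟩
      have hcard : #((P.erase x).erase y) + 2 = #P := by
        have := card_erase_add_one hyPx; have := card_erase_add_one hxP; omega
      obtain ⟨m, hm, hcost⟩ := ih (((P.erase x).erase_subset y).trans hPx)
        ((Nat.even_add.mp (hcard ▸ hP)).mpr even_two)
      obtain ⟨m', hm', hcost'⟩ := hm.exists_insert_insert (a := x) (b := y)
        (fun h => ne_of_mem_erase (mem_of_mem_erase h) rfl) (fun h => ne_of_mem_erase h rfl) hxy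
      rw [insert_erase hyPx, insert_erase hxP] at hm' hcost'
      exact ⟨m', hm', by linarith⟩
    · -- `x` takes over the partner `m y` of `y` in a pairing of `P - x + y`
      have hyPx : y ∉ P.erase x := fun h => hyP (mem_of_mem_erase h)
      obtain ⟨m, hm, hcost⟩ := ih (insert_subset hy hPx) (by
        rwa [card_insert_of_notMem hyPx, card_erase_add_one hxP])
      obtain ⟨hmy, hmyy, -⟩ := hm y (mem_insert_self y _)
      have hmyPx : m y ∈ P.erase x := (mem_insert.mp hmy).resolve_left hmyy
      have hR := hm.erase_erase (mem_insert_self y _)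
      have hcostR := hm.sum_dist_eq_add_sum_erase_erase (mem_insert_self y _)
      rw [erase_insert hyPx] at hR hcostR
      obtain ⟨m', hm', hcost'⟩ := hR.exists_insert_insert (a := x) (b := m y)
        (fun h => ne_of_mem_erase (mem_of_mem_erase h) rfl) (fun h => ne_of_mem_erase h rfl)
        (ne_of_mem_erase hmyPx).symm
      rw [insert_erase hmyPx, insert_erase hxP] at hm' hcost'
      exact ⟨m', hm', by linarith [dist_triangle x y (m y)]⟩

end Metric

section Graph

open SimpleGraph

variable {V : Type*} [PseudoMetricSpace V]

noncomputable def totalLength (G : SimpleGraph V) [Fintype G.edgeSet] : ℝ :=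
  ∑ e ∈ G.edgeFinset, Sym2.lift ⟨dist, dist_comm⟩ e

lemma totalLength_eq_dist_add_totalLength_induce [DecidableEq V] {G : SimpleGraph V}
    [Fintype G.edgeSet] {x y : V} [Fintype (G.induce {x}ᶜ).edgeSet] (hxy : G.Adj x y)
    (hleaf : ∀ z, G.Adj x z → z = y) :
    totalLength G = dist x y + totalLength (G.induce {x}ᶜ) := by
  have hedges : G.edgeFinset =
      insert s(x, y) ((G.induce {x}ᶜ).edgeFinset.map (Function.Embedding.subtype _).sym2Map) := by
    ext e
    induction e using Sym2.ind with
    | _ a b =>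
      simp only [mem_edgeFinset, mem_edgeSet, mem_insert, Sym2.eq, Sym2.rel_iff', Prod.mk.injEq,
        Prod.swap_prod_mk, mem_map, Function.Embedding.sym2Map_apply,
        Function.Embedding.subtype_apply, Function.Embedding.coe_subtype, Sym2.exists, comap_adj,
        Sym2.map_mk, Subtype.exists, Set.mem_compl_iff, Set.mem_singleton_iff, exists_and_left,
        exists_prop]
      constructor
      · intro h
        by_cases ha : a = x
        · exact Or.inl (Or.inl ⟨ha, hleaf b (ha ▸ h)⟩)
        by_cases hb : b = x
        · exact Or.inl (Or.inr ⟨hleaf a (hb ▸ h.symm), hb⟩)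
        exact Or.inr ⟨a, ha, b, h, hb, Or.inl ⟨rfl, rfl⟩⟩
      · rintro ((⟨rfl, rfl⟩ | ⟨rfl, rfl⟩) | ⟨c, -, d, hcd, -, ⟨rfl, rfl⟩ | ⟨rfl, rfl⟩⟩)
        exacts [hxy, hxy.symm, hcd, hcd.symm]
  have hxy_notMem :
      s(x, y) ∉ (G.induce {x}ᶜ).edgeFinset.map (Function.Embedding.subtype _).sym2Map := by
    simp +contextual [Sym2.exists, Subtype.exists]
  rw [totalLength, hedges, sum_insert hxy_notMem, sum_map, totalLength]
  congr 1
  refine sum_congr rfl fun e _ => ?_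
  induction e using Sym2.ind with
  | _ a b => rfl

lemma attachable_univ_of_isTree [Fintype V] [DecidableEq V] {T : SimpleGraph V}
    [Fintype T.edgeSet] (hT : T.IsTree) : Attachable (univ : Finset V) (totalLength T) := by
  induction hn : Fintype.card V generalizing V with
  | zero =>
    exact ((Fintype.card_eq_zero_iff.mp hn).false hT.connected.nonempty.some).elim
  | succ n ih =>
    classical
    rcases subsingleton_or_nontrivial V with hV | hV
    · obtain ⟨a⟩ := hT.connected.nonempty
      have hE : T.edgeFinset = ∅ := by
        ext e; induction e using Sym2.ind with
        | _ b c => simp [Subsingleton.elim b c]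
      rw [show (univ : Finset V) = {a} from eq_singleton_iff_unique_mem.mpr
        ⟨mem_univ a, fun b _ => Subsingleton.elim b a⟩, totalLength, hE, sum_empty]
      exact Attachable.singleton a
    obtain ⟨x, hx⟩ := hT.exists_vert_degree_one_of_nontrivial
    obtain ⟨y, hxy, hleaf⟩ := degree_eq_one_iff_existsUnique_adj.mp hx
    have hT' : (T.induce {x}ᶜ).IsTree :=
      ⟨hT.connected.induce_compl_singleton_of_degree_eq_one hx, hT.isAcyclic.induce _⟩
    have hcard : Fintype.card ({x}ᶜ : Set V) = n := by
      rw [Fintype.card_compl_set, hn, Set.card_singleton, Nat.add_sub_cancel]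
    have h := (ih hT' hcard).map (Function.Embedding.subtype _) isometry_subtype_coe
    rw [univ_map_subtype] at h
    convert h.attach (x := x) (y := y) (by simp) (by simpa using hxy.ne') using 1
    · ext z; simp [em]
    · rw [totalLength_eq_dist_add_totalLength_induce hxy hleaf, add_comm]

end Graph

lemma sum_le_clog_mul_of_forall_exists_half {ι : Type*} {S : Finset ι} {c : ι → ℝ} {W : ℝ}
    (h : ∀ I ⊆ S, ∃ L ⊆ I, #I ≤ 2 * #L ∧ ∑ i ∈ L, c i ≤ W) :
    ∑ i ∈ S, c i ≤ Nat.clog 2 (#S + 1) * W := by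
  classical
  suffices H : ∀ k : ℕ, ∀ I ⊆ S, #I + 1 ≤ 2 ^ k → ∑ i ∈ I, c i ≤ k * W from
    H _ S subset_rfl (Nat.le_pow_clog one_lt_two _)
  intro k
  induction k with
  | zero => intro I _ hI; simp [card_eq_zero.mp (by simpa using hI)]
  | succ k ih =>
    intro I hIS hI
    obtain ⟨L, hLI, hL, hcL⟩ := h I hIS
    have hrest := ih (I \ L) (sdiff_subset.trans hIS)
      (by rw [card_sdiff_of_subset hLI]; rw [pow_succ] at hI; omega)
    rw [← sum_sdiff hLI]
    push_cast
    linarith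

section Greedy

variable {α : Type*} [PseudoMetricSpace α]

noncomputable def greedyCost (v : ℕ → α) (i : ℕ) : ℝ :=
  if h : i = 0 then 0 else (range i).inf' (nonempty_range_iff.mpr h) fun j => dist (v i) (v j)

lemma greedyCost_le {v : ℕ → α} {i j : ℕ} (hji : j < i) :
    greedyCost v i ≤ dist (v i) (v j) := by
  rw [greedyCost, dif_neg (by omega)]
  exact inf'_le _ (mem_range.mpr hji)

lemma Attachable.exists_half_sum_greedyCost_le [DecidableEq α] {s : Finset α} {w : ℝ}
    (hs : Attachable s w) {v : ℕ → α} {z : ℕ} (hv : Set.InjOn v (Set.Iic z))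
    (hvs : ∀ i ≤ z, v i ∈ s) {I : Finset ℕ} (hI : I ⊆ Icc 1 z) :
    ∃ L ⊆ I, #I ≤ 2 * #L ∧ ∑ i ∈ L, greedyCost v i ≤ w := by
  obtain ⟨J, hIJ, hJz, hJ, hJI⟩ : ∃ J : Finset ℕ,
      I ⊆ J ∧ ↑J ⊆ Set.Iic z ∧ Even #J ∧ ∀ i ∈ J, i ≠ 0 → i ∈ I := by
    have h0 : 0 ∉ I := fun h => by simpa using hI h
    have hIz : ↑I ⊆ Set.Iic z := fun i hi => (mem_Icc.mp (hI hi)).2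
    by_cases hI2 : Even #I
    · exact ⟨I, subset_rfl, hIz, hI2, fun i hi _ => hi⟩
    · refine ⟨insert 0 I, subset_insert _ _, ?_,
        by rwa [card_insert_of_notMem h0, Nat.even_add_one],
        fun i hi hi0 => (mem_insert.mp hi).resolve_left hi0⟩
      rw [coe_insert]
      exact Set.insert_subset (Nat.zero_le z) hIz
  have hinj : Set.InjOn v J := hv.mono hJz
  obtain ⟨m, hm, hcost⟩ := hs.exists_isPairingOn (P := J.image v)
    (image_subset_iff.mpr fun i hi => hvs i (hJz hi)) (by rwa [card_image_of_injOn hinj])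
  obtain ⟨μ, hμ, hμv⟩ := hm.exists_pullback hinj
  have hsum : ∑ i ∈ J, dist (v i) (v (μ i)) ≤ 2 * w := by
    rwa [sum_congr rfl fun i hi => by rw [hμv i hi],
      ← sum_image (f := fun a => dist a (m a)) hinj]
  have hhalf := hμ.sum_eq_two_nsmul_sum_filter_lt (fun i j => dist (v i) (v j))
    fun _ _ => dist_comm _ _
  refine ⟨{i ∈ J | μ i < i}, fun i hi => hJI i (mem_filter.mp hi).1 ?_, ?_, ?_⟩
  · have := (mem_filter.mp hi).2; omega
  · rw [← hμ.card_eq_two_mul_card_filter_lt]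
    exact card_le_card hIJ
  · calc ∑ i ∈ J with μ i < i, greedyCost v i
        ≤ ∑ i ∈ J with μ i < i, dist (v i) (v (μ i)) :=
          sum_le_sum fun i hi => greedyCost_le (mem_filter.mp hi).2
      _ ≤ w := by rw [nsmul_eq_mul] at hhalf; push_cast at hhalf; linarith

end Greedy

/-- **Main theorem (metric form).**  Let `v 0, v 1, …, v z` be pairwise
distinct points of a pseudometric space, let `Y` be a finite set of points
containing them, and let `T` be a tree on vertex set `Y` of total weight
`W = ∑_{{u,v} ∈ E(T)} d(u,v)`.  Then the sum of the greedy connection costs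
`∑_{i=1}^{z} min_{0 ≤ j < i} d (v i) (v j)` is at most
`⌈log₂ (z+1)⌉ * W`. -/
theorem greedy_connection_le_log_mul_steiner {α : Type*} [PseudoMetricSpace α]
    (z : ℕ) (v : ℕ → α)
    (hdist : ∀ i ≤ z, ∀ j ≤ z, i ≠ j → v i ≠ v j)
    (Y : Finset α) (hY : ∀ i ≤ z, v i ∈ Y)
    (T : SimpleGraph {x // x ∈ Y}) (hT : T.IsTree)
    [Fintype T.edgeSet] (W : ℝ)
    (hW : W = ∑ e ∈ T.edgeFinset,
        Sym2.lift ⟨fun (u u' : {x // x ∈ Y}) => dist (u : α) (u' : α),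
          fun u u' => dist_comm (u : α) (u' : α)⟩ e) :
    ∑ i ∈ (Finset.Icc 1 z).attach,
        (Finset.range (i : ℕ)).inf'
          (Finset.nonempty_range_iff.mpr
            (by have := Finset.mem_Icc.mp i.2; omega))
          (fun j => dist (v (i : ℕ)) (v j))
      ≤ (⌈Real.logb 2 ((z : ℝ) + 1)⌉ : ℝ) * W := by
  classical
  have hs : Attachable Y W := by
    have h := (attachable_univ_of_isTree hT).map (Function.Embedding.subtype _) isometry_subtype_coe
    rw [hW]
    rwa [univ_eq_attach, attach_map_val] at h
  have hv : Set.InjOn v (Set.Iic z) := fun i hi j hj h => by_contra fun hij => hdist i hi j hj hij h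
  have hsum := sum_le_clog_mul_of_forall_exists_half fun I hI =>
    hs.exists_half_sum_greedyCost_le hv hY hI
  have hlog : ⌈Real.logb 2 ((z : ℝ) + 1)⌉ = Nat.clog 2 (z + 1) := by
    exact_mod_cast Real.ceil_logb_natCast (b := 2) (r := ((z + 1 : ℕ) : ℝ)) (by positivity)
  rw [Nat.card_Icc, Nat.add_sub_cancel] at hsum
  calc _ = ∑ i ∈ (Icc 1 z).attach, greedyCost v i := sum_congr rfl fun i _ => by
        rw [greedyCost, dif_neg (by have := mem_Icc.mp i.2; omega)]
    _ = ∑ i ∈ Icc 1 z, greedyCost v i := sum_attach _ _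
    _ ≤ Nat.clog 2 (z + 1) * W := hsum
    _ = _ := by rw [hlog, Int.cast_natCast]
end

section
/- Let G be a finite connected simple graph on vertex set V, let w assign a strictly positive real weight to every edge of G, let r ∈ V, and let D : V → ℝ satisfy D(r) = 0 and, for every v ≠ r, D(v) = min_{u adjacent to v} (D(u) + w(u,v)). Then for every v ∈ V, D(v) equals the shortest-path distance from r to v, i.e. the minimum over all walks from r to v in G of the sum of the weights of their edges. -/
namespace SPAux

variable {V : Type*} (G : SimpleGraph V) (w : V → V → ℝ)

def wt {a b : V} (p : G.Walk a b) : ℝ :=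
  (p.darts.map (fun d => w d.toProd.1 d.toProd.2)).sum

@[simp] lemma wt_nil {a : V} : wt G w (SimpleGraph.Walk.nil : G.Walk a a) = 0 := rfl

@[simp] lemma wt_cons {a b c : V} (h : G.Adj a b) (p : G.Walk b c) :
    wt G w (SimpleGraph.Walk.cons h p) = w a b + wt G w p := by
  simp [wt]

lemma wt_nonneg (hpos : ∀ u v, G.Adj u v → 0 < w u v) {a b : V} (p : G.Walk a b) :
    0 ≤ wt G w p := by
  induction p with
  | nil => simp
  | cons h p ih => simp only [wt_cons]; nlinarith [hpos _ _ h]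

lemma wt_reverse (hsymm : ∀ u v, w u v = w v u) {a b : V} (p : G.Walk a b) :
    wt G w p.reverse = wt G w p := by
  unfold wt
  rw [SimpleGraph.Walk.darts_reverse, List.map_reverse, List.sum_reverse, List.map_map]
  congr 1
  apply List.map_congr_left
  intro d _
  exact hsymm d.toProd.2 d.toProd.1

end SPAux

open SPAux in
/-- **Fixed-point characterization of shortest-path distances.**
Let `G` be a finite connected simple graph with strictly positive symmetric
edge weights `w`, let `r` be a root, and let `D : V → ℝ` satisfy `D r = 0`
and, for every `v ≠ r`, `D v = min_{u adjacent to v} (D u + w u v)`.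
Then for every vertex `v`, `D v` is the shortest-path distance from `r` to
`v`, i.e. the minimum over all walks from `r` to `v` of the sum of the
weights of their edges. -/
theorem dist_fixed_point_eq_shortest_path {V : Type*} [Fintype V]
    (G : SimpleGraph V) (hG : G.Connected)
    (w : V → V → ℝ)
    (hpos : ∀ u v, G.Adj u v → 0 < w u v)
    (hsymm : ∀ u v, w u v = w v u)
    (r : V) (D : V → ℝ) (hr : D r = 0)
    (hD : ∀ v, v ≠ r →
      IsLeast {x : ℝ | ∃ u, G.Adj u v ∧ x = D u + w u v} (D v)) :
    ∀ v : V,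
      IsLeast {x : ℝ | ∃ p : G.Walk r v,
        x = (p.darts.map (fun d => w d.toProd.1 d.toProd.2)).sum} (D v) := by
  classical
  -- lower bound: for any walk from v to r, D v ≤ its weight
  have lb : ∀ {v b : V} (p : G.Walk v b), b = r → D v ≤ wt G w p := by
    intro v b p
    induction p with
    | nil => rintro rfl; simp [hr]
    | @cons a b c h p ih =>
      intro hc
      by_cases ha : a = r
      · have h0 : D a = 0 := by rw [ha]; exact hr
        rw [h0]
        exact wt_nonneg G w hpos _
      · have hmem : D a ≤ D b + w b a :=
          (hD a ha).2 ⟨b, h.symm, rfl⟩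
        have ihr := ih hc
        rw [wt_cons]
        have := hsymm a b
        linarith
  -- existence: a walk from r to v with weight D v
  have ex : ∀ (n : ℕ) (v : V),
      (Finset.univ.filter (fun u => D u < D v)).card = n →
      ∃ p : G.Walk r v, wt G w p = D v := by
    intro n
    induction n using Nat.strong_induction_on with
    | _ n ih =>
      intro v hn
      by_cases hv : v = r
      · subst hv
        exact ⟨SimpleGraph.Walk.nil, by simp [hr]⟩
      · obtain ⟨u, hu, heq⟩ := (hD v hv).1
        have hlt : D u < D v := by
          have := hpos u v hu
          linarith
        have hss : (Finset.univ.filter (fun x => D x < D u)) ⊂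
            (Finset.univ.filter (fun x => D x < D v)) := by
          constructor
          · intro x hx
            simp only [Finset.mem_filter, Finset.mem_univ, true_and] at hx ⊢
            linarith
          · intro hcon
            have := hcon (Finset.mem_filter.mpr ⟨Finset.mem_univ u, hlt⟩)
            simp only [Finset.mem_filter, Finset.mem_univ, true_and] at this
            linarith
        have hcard : (Finset.univ.filter (fun x => D x < D u)).card < n := by
          rw [← hn]; exact Finset.card_lt_card hss
        obtain ⟨p, hp⟩ := ih _ hcard u rfl
        refine ⟨p.concat hu, ?_⟩
        have := wt_reverse G w hsymm (p.concat hu)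
        rw [← this]
        rw [SimpleGraph.Walk.reverse_concat, wt_cons, wt_reverse G w hsymm, hp,
          hsymm v u]
        linarith
  intro v
  obtain ⟨p, hp⟩ := ex _ v rfl
  constructor
  · exact ⟨p, hp.symm⟩
  · rintro x ⟨p, rfl⟩
    have := lb p.reverse rfl
    rwa [wt_reverse G w hsymm] at this
end
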